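/- arXiv:1707.07147 — 7 statements merged into one kernel-verified Lean document; each statement's English description precedes it below -/
import Mathlib

section
/- Let $x > 0$ and $\alpha \in [0,1]$. Then $(1-\alpha) + \alpha x \le K(x)^R \, x^{\alpha}$, where $K(x) = (x+1)^2/(4x)$ is the Kantorovich constant and $R = \max\{\alpha, 1-\alpha\}$. -/
theorem key_half (x α : ℝ) (hx : 0 < x) (h0 : 0 ≤ α) (h2 : α ≤ 1/2) :
    (1 - α) + α * x ≤ ((x + 1)^2 / (4 * x)) ^ (1 - α) * x ^ α := by
  set K : ℝ := (x + 1)^2 / (4 * x) with hK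
  have hx1 : (0:ℝ) < x + 1 := by linarith
  have hKpos : 0 < K := by positivity
  set v : ℝ := (x + 1) / (2 * x) with hv
  have hvpos : 0 < v := by positivity
  -- weighted AM-GM : v ^ (2α) ≤ (1 - 2α) + 2α * v
  have hgm : v ^ (2 * α) ≤ (1 - 2*α) + 2*α * v := by
    have := Real.geom_mean_le_arith_mean2_weighted (by linarith : (0:ℝ) ≤ 1 - 2*α)
      (by linarith : (0:ℝ) ≤ 2*α) zero_le_one hvpos.le
      (by ring : (1 - 2*α) + 2*α = 1)
    simpa [Real.one_rpow] using this
  -- identity: K ^ (1-α) * x ^ α = K / v ^ (2α)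
  have hvsq : v * v = K / x := by
    rw [hv, hK]; field_simp; ring
  have hid : K ^ (1 - α) * x ^ α = K / v ^ (2 * α) := by
    have h1 : v ^ (2 * α) = (v * v) ^ α := by
      rw [Real.mul_rpow hvpos.le hvpos.le, ← Real.rpow_add hvpos]; ring_nf
    rw [h1, hvsq, Real.div_rpow hKpos.le hx.le, Real.rpow_sub hKpos, Real.rpow_one]
    field_simp
  rw [hid]
  -- combine
  have hden : 0 < (1 - 2*α) + 2*α * v := by nlinarith
  have hstep : (1 - α) + α * x ≤ K / ((1 - 2*α) + 2*α * v) := by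
    rw [le_div_iff₀ hden, hK, hv]
    rw [show (1 - 2*α + 2*α*((x+1)/(2*x))) = ((1-α)*x + α)/x by field_simp; ring,
      ← mul_div_assoc, div_le_div_iff₀ hx (by positivity : (0:ℝ) < 4 * x)]
    nlinarith [sq_nonneg ((1 - 2*α) * (x - 1)), hx.le]
  refine hstep.trans ?_
  exact div_le_div_of_nonneg_left hKpos.le (Real.rpow_pos_of_pos hvpos _) hgm

theorem stmt_0 (x α : ℝ) (hx : 0 < x) (hα : α ∈ Set.Icc (0:ℝ) 1) :
    (1 - α) + α * x ≤ ((x + 1)^2 / (4 * x)) ^ max α (1 - α) * x ^ α := by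
  obtain ⟨h0, h1⟩ := hα
  rcases le_or_gt α (1/2) with hc | hc
  · rw [max_eq_right (by linarith : α ≤ 1 - α)]
    exact key_half x α hx h0 hc
  · rw [max_eq_left (by linarith : 1 - α ≤ α)]
    have hxi : (0:ℝ) < 1/x := by positivity
    have h := key_half (1/x) (1-α) hxi (by linarith) (by linarith)
    have hKeq : ((1/x) + 1)^2 / (4 * (1/x)) = (x+1)^2 / (4*x) := by
      field_simp; ring
    rw [hKeq, show (1 - (1-α)) = α by ring] at h
    have h1x : x * (1/x) ^ (1-α) = x ^ α := by
      rw [one_div, Real.inv_rpow hx.le, ← Real.rpow_neg hx.le]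
      nth_rewrite 1 [← Real.rpow_one x]
      rw [← Real.rpow_add hx]
      ring_nf
    calc (1 - α) + α * x = x * (α + (1-α) * (1/x)) := by field_simp; ring
      _ ≤ x * (((x+1)^2/(4*x)) ^ α * (1/x) ^ (1-α)) :=
          mul_le_mul_of_nonneg_left h hx.le
      _ = ((x+1)^2/(4*x)) ^ α * (x * (1/x) ^ (1-α)) := by ring
      _ = ((x+1)^2/(4*x)) ^ α * x ^ α := by rw [h1x]
end

section
/- Let $a, b$ be positive reals with $0 < s \le b/a \le t$ and let $\alpha \in [0,1]$. Then $(1-\alpha)a + \alpha b \le \max\{K(s)^R, K(t)^R\} \, a^{1-\alpha} b^{\alpha}$, where $K$ is the Kantorovich constant $K(x)=(x+1)^2/(4x)$ and $R = \max\{\alpha, 1-\alpha\}$. -/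
-- core inequality in β-form: for v = (x+1)/2,
-- (1-β) + β v ≤ v^(2-β) * x^(β-1), for β ∈ [0,1], x > 0
lemma half_aux (x β : ℝ) (hx : 0 < x) (hβ0 : 0 ≤ β) (hβ1 : β ≤ 1) :
    (1 - β) + β * ((x + 1) / 2) ≤ ((x + 1) / 2) ^ (2 - β) * x ^ (β - 1) := by
  set v : ℝ := (x + 1) / 2 with hvdef
  have hv0 : 0 < v := by positivity
  have hL0 : 0 < (1 - β) + β * v := by
    nlinarith [mul_nonneg hβ0 hv0.le, mul_nonneg (sub_nonneg.2 hβ1) hv0.le]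
  have amgm : (x / v) ^ (1 - β) * (1:ℝ) ^ β ≤ (1 - β) * (x / v) + β * 1 :=
    Real.geom_mean_le_arith_mean2_weighted (by linarith) hβ0 (by positivity) zero_le_one
      (by ring)
  rw [Real.one_rpow, mul_one, mul_one] at amgm
  have h1 : (x / v) * (1 / v) ≤ 1 := by
    rw [div_mul_div_comm, div_le_one (by positivity), hvdef]
    nlinarith [sq_nonneg (x - 1)]
  have h2 : (x / v) + (1 / v) = 2 := by
    rw [hvdef]; field_simp
  have hprod : ((1 - β) * (x / v) + β) * ((1 - β) * (1 / v) + β) ≤ 1 := by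
    nlinarith [mul_le_mul_of_nonneg_left h1 (sq_nonneg (1 - β)), sq_nonneg (1 - β)]
  have hC0 : 0 < (1 - β) * (1 / v) + β := by
    have : (1 - β) * (1 / v) + β = ((1 - β) + β * v) / v := by field_simp
    rw [this]; positivity
  have key : (x / v) ^ (1 - β) * (((1 - β) + β * v) / v) ≤ 1 := by
    have hCeq : ((1 - β) + β * v) / v = (1 - β) * (1 / v) + β := by field_simp
    rw [hCeq]
    calc (x / v) ^ (1 - β) * ((1 - β) * (1 / v) + β)
        ≤ ((1 - β) * (x / v) + β) * ((1 - β) * (1 / v) + β) :=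
          mul_le_mul_of_nonneg_right amgm hC0.le
      _ ≤ 1 := hprod
  -- rewrite key: (x/v)^(1-β) = x^(1-β) / v^(1-β)
  rw [Real.div_rpow hx.le hv0.le] at key
  have hX : (0:ℝ) < x ^ (1 - β) := Real.rpow_pos_of_pos hx _
  have hV : (0:ℝ) < v ^ (1 - β) := Real.rpow_pos_of_pos hv0 _
  have key2 : x ^ (1 - β) * ((1 - β) + β * v) ≤ v ^ (1 - β) * v := by
    rw [div_mul_div_comm, div_le_one (by positivity)] at key
    linarith
  have e2 : v ^ (2 - β) = v ^ (1 - β) * v := by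
    rw [show (2 - β) = (1 - β) + 1 by ring, Real.rpow_add hv0, Real.rpow_one]
  have e3 : x ^ (β - 1) = (x ^ (1 - β))⁻¹ := by
    rw [show β - 1 = -(1 - β) by ring, Real.rpow_neg hx.le]
  rw [e2, e3, ← div_eq_mul_inv, le_div_iff₀ hX]
  linarith [key2]

-- scalar reverse Young for α ≤ 1/2
lemma scalar_half (x α : ℝ) (hx : 0 < x) (hα0 : 0 ≤ α) (hα : α ≤ 1 / 2) :
    (1 - α) + α * x ≤ ((x + 1) ^ 2 / (4 * x)) ^ (1 - α) * x ^ α := by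
  have h := half_aux x (2 * α) hx (by linarith) (by linarith)
  have hv0 : (0:ℝ) < (x + 1) / 2 := by positivity
  have eL : (1 - 2 * α) + 2 * α * ((x + 1) / 2) = (1 - α) + α * x := by ring
  have eK : ((x + 1) ^ 2 / (4 * x)) ^ (1 - α) * x ^ α
      = ((x + 1) / 2) ^ (2 - 2 * α) * x ^ (2 * α - 1) := by
    have e0 : (x + 1) ^ 2 / (4 * x) = ((x + 1) / 2) ^ (2:ℕ) / x := by
      rw [div_eq_div_iff (by positivity) (by positivity)]; ring
    rw [e0, Real.div_rpow (by positivity) hx.le]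
    rw [← Real.rpow_natCast ((x + 1) / 2) 2, ← Real.rpow_mul hv0.le]
    rw [div_eq_mul_inv, ← Real.rpow_neg hx.le, mul_assoc, ← Real.rpow_add hx]
    have ea : ((2:ℕ):ℝ) * (1 - α) = 2 - 2 * α := by push_cast; ring
    have eb : -(1 - α) + α = 2 * α - 1 := by ring
    rw [ea, eb]
  rw [eK]
  linarith [h, eL.symm.le, eL.le]

-- scalar reverse Young, full
lemma scalar_full (x α : ℝ) (hx : 0 < x) (hα0 : 0 ≤ α) (hα1 : α ≤ 1) :
    (1 - α) + α * x ≤ ((x + 1) ^ 2 / (4 * x)) ^ max α (1 - α) * x ^ α := by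
  rcases le_total α (1 / 2) with h | h
  · rw [max_eq_right (by linarith)]
    exact scalar_half x α hx hα0 h
  · rw [max_eq_left (by linarith)]
    have hx' : (0:ℝ) < x⁻¹ := by positivity
    have h' := scalar_half x⁻¹ (1 - α) hx' (by linarith) (by linarith)
    -- h' : (1-(1-α)) + (1-α) x⁻¹ ≤ ((x⁻¹+1)^2/(4 x⁻¹))^(1-(1-α)) * (x⁻¹)^(1-α)
    have eK : (x⁻¹ + 1) ^ 2 / (4 * x⁻¹) = (x + 1) ^ 2 / (4 * x) := by
      field_simp; ring
    rw [eK, show (1 - (1 - α)) = α by ring] at h'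
    -- multiply by x
    have hKpos : (0:ℝ) < ((x + 1) ^ 2 / (4 * x)) ^ α := by
      apply Real.rpow_pos_of_pos; positivity
    have := mul_le_mul_of_nonneg_right h' hx.le
    have einv : (x⁻¹) ^ (1 - α) * x = x ^ α := by
      rw [Real.inv_rpow hx.le, ← Real.rpow_neg hx.le]
      nth_rewrite 2 [← Real.rpow_one x]
      rw [← Real.rpow_add hx]
      congr 1; ring
    calc (1 - α) + α * x = (α + (1 - α) * x⁻¹) * x := by field_simp; ring
      _ ≤ ((x + 1) ^ 2 / (4 * x)) ^ α * x⁻¹ ^ (1 - α) * x := this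
      _ = ((x + 1) ^ 2 / (4 * x)) ^ α * x ^ α := by rw [mul_assoc, einv]

theorem stmt_3 (a b s t α : ℝ) (ha : 0 < a) (hb : 0 < b) (hs : 0 < s)
    (hst : s ≤ t) (h1 : s ≤ b / a) (h2 : b / a ≤ t) (hα : α ∈ Set.Icc (0:ℝ) 1) :
    (1 - α) * a + α * b ≤
      max (((s + 1)^2 / (4 * s)) ^ max α (1 - α)) (((t + 1)^2 / (4 * t)) ^ max α (1 - α)) *
        (a ^ (1 - α) * b ^ α) := by
  obtain ⟨hα0, hα1⟩ := hα
  set x : ℝ := b / a with hxdef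
  have hx0 : 0 < x := div_pos hb ha
  have ht0 : 0 < t := lt_of_lt_of_le hs hst
  have hab : a * x = b := by rw [hxdef]; field_simp
  have hR0 : 0 ≤ max α (1 - α) := le_trans hα0 (le_max_left _ _)
  have hKx0 : (0:ℝ) ≤ (x + 1) ^ 2 / (4 * x) := by positivity
  have h := scalar_full x α hx0 hα0 hα1
  have eG : a ^ (1 - α) * b ^ α = a * x ^ α := by
    rw [← hab, Real.mul_rpow ha.le hx0.le, ← mul_assoc, ← Real.rpow_add ha,
      show (1 - α) + α = 1 by ring, Real.rpow_one]
  have hKmax : (x + 1) ^ 2 / (4 * x)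
      ≤ max ((s + 1) ^ 2 / (4 * s)) ((t + 1) ^ 2 / (4 * t)) := by
    rcases le_or_gt 1 (t * x) with hc | hc
    · refine le_max_of_le_right ?_
      rw [div_le_div_iff₀ (by positivity) (by positivity)]
      nlinarith [mul_nonneg (sub_nonneg.2 h2) (sub_nonneg.2 hc)]
    · refine le_max_of_le_left ?_
      have hsx : s * x < 1 := lt_of_le_of_lt (mul_le_mul_of_nonneg_right hst hx0.le) hc
      rw [div_le_div_iff₀ (by positivity) (by positivity)]
      nlinarith [mul_nonneg (sub_nonneg.2 h1) (sub_nonneg.2 hsx.le)]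
  have hKR : ((x + 1) ^ 2 / (4 * x)) ^ max α (1 - α)
      ≤ max (((s + 1)^2 / (4 * s)) ^ max α (1 - α)) (((t + 1)^2 / (4 * t)) ^ max α (1 - α)) := by
    rcases le_total ((s + 1) ^ 2 / (4 * s)) ((t + 1) ^ 2 / (4 * t)) with hk | hk
    · rw [max_eq_right hk] at hKmax
      exact le_max_of_le_right (Real.rpow_le_rpow hKx0 hKmax hR0)
    · rw [max_eq_left hk] at hKmax
      exact le_max_of_le_left (Real.rpow_le_rpow hKx0 hKmax hR0)
  calc (1 - α) * a + α * b = a * ((1 - α) + α * x) := by rw [← hab]; ring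
    _ ≤ a * (((x + 1) ^ 2 / (4 * x)) ^ max α (1 - α) * x ^ α) :=
        mul_le_mul_of_nonneg_left h ha.le
    _ = ((x + 1) ^ 2 / (4 * x)) ^ max α (1 - α) * (a * x ^ α) := by ring
    _ ≤ max (((s + 1)^2 / (4 * s)) ^ max α (1 - α)) (((t + 1)^2 / (4 * t)) ^ max α (1 - α))
          * (a * x ^ α) := mul_le_mul_of_nonneg_right hKR (by positivity)
    _ = _ := by rw [eG]
end

section
/- Let $A, B$ be positive definite $n \times n$ complex matrices such that $sA \le B \le tA$ in the Loewner order for some constants $0 < s \le t$, and let $\alpha \in [0,1]$. Then $(1-\alpha)A + \alpha B \le \max\{K(s)^R, K(t)^R\} \, (A \sharp_\alpha B)$, where $A \sharp_\alpha B = A^{1/2}(A^{-1/2} B A^{-1/2})^{\alpha} A^{1/2}$, $K(x) = (x+1)^2/(4x)$, and $R = \max\{\alpha, 1-\alpha\}$. -/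
/-!
Conjugating by `A^{-1/2}` turns the hypotheses into `s ≤ C ≤ t` for `C = A^{-1/2} B A^{-1/2}`,
so by the functional calculus it suffices to prove the scalar reverse Young inequality
`(1 - α) + α x ≤ K(x)^R x^α` on `[s, t]` and to bound `K(x) ≤ max (K s) (K t)` there, which holds
because `K` is convex. For `α ≥ 1/2` the scalar inequality is Bernoulli's inequality, since
`K(x)^α x^α = ((x + 1) / 2)^(2α)`; the case `α ≤ 1/2` reduces to it under `x ↦ x⁻¹`, which
fixes `K`.
-/

open Matrix
open scoped ComplexOrder

variable {n : Type*} [Fintype n] [DecidableEq n]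

/-- Real power of a matrix via the continuous functional calculus. -/
noncomputable def mrpow (A : Matrix n n ℂ) (r : ℝ) : Matrix n n ℂ :=
  cfc (fun x : ℝ => x ^ r) A

/-- Weighted geometric mean `A ♯_α B = A^{1/2} (A^{-1/2} B A^{-1/2})^α A^{1/2}`. -/
noncomputable def geomMean (A B : Matrix n n ℂ) (α : ℝ) : Matrix n n ℂ :=
  mrpow A (1/2) * mrpow (mrpow A (-(1/2)) * B * mrpow A (-(1/2))) α * mrpow A (1/2)

open Set
open scoped MatrixOrder

noncomputable def kantorovich (x : ℝ) : ℝ := (x + 1) ^ 2 / (4 * x)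

lemma kantorovich_eq (x : ℝ) (hx : x ≠ 0) : kantorovich x = (x + 2 + x⁻¹) / 4 := by
  unfold kantorovich; field_simp; ring

lemma kantorovich_nonneg {x : ℝ} (hx : 0 ≤ x) : 0 ≤ kantorovich x := by
  unfold kantorovich; positivity

lemma kantorovich_inv (x : ℝ) : kantorovich x⁻¹ = kantorovich x := by
  rcases eq_or_ne x 0 with rfl | hx
  · simp
  rw [kantorovich_eq _ hx, kantorovich_eq _ (inv_ne_zero hx), inv_inv]; ring

lemma kantorovich_mul_self {x : ℝ} (hx : x ≠ 0) : kantorovich x * x = ((x + 1) / 2) ^ 2 := by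
  unfold kantorovich; field_simp; ring

lemma convexOn_kantorovich : ConvexOn ℝ (Ioi 0) kantorovich := by
  have h : ConvexOn ℝ (Ioi (0 : ℝ)) fun x ↦ (x + 2 + x⁻¹) / 4 := by
    simpa [div_eq_inv_mul] using (((convexOn_id (convex_Ioi (0 : ℝ))).add_const 2).add
      (convexOn_zpow (𝕜 := ℝ) (-1))).smul (by norm_num : (0 : ℝ) ≤ 4⁻¹)
  exact h.congr fun x hx ↦ (kantorovich_eq x (ne_of_gt hx)).symm

lemma kantorovich_le_max_of_mem_Icc {s t x : ℝ} (hs : 0 < s) (hx : x ∈ Icc s t) :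
    kantorovich x ≤ max (kantorovich s) (kantorovich t) :=
  convexOn_kantorovich.le_on_segment hs (hs.trans_le (hx.1.trans hx.2))
    (segment_eq_Icc (hx.1.trans hx.2) ▸ hx)

lemma add_le_kantorovich_rpow_mul_rpow_of_half_le {x α : ℝ} (hx : 0 < x) (hα : 1 / 2 ≤ α) :
    (1 - α) + α * x ≤ kantorovich x ^ α * x ^ α := by
  rw [← Real.mul_rpow (kantorovich_nonneg hx.le) hx.le, kantorovich_mul_self hx.ne',
    ← Real.rpow_natCast, ← Real.rpow_mul (by positivity)]
  have := one_add_mul_self_le_rpow_one_add (s := (x - 1) / 2) (by linarith) (p := 2 * α)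
    (by linarith)
  convert this using 1 <;> ring_nf

lemma add_le_kantorovich_rpow_mul_rpow {x : ℝ} (hx : 0 < x) (α : ℝ) :
    (1 - α) + α * x ≤ kantorovich x ^ max α (1 - α) * x ^ α := by
  rcases le_total (1 / 2) α with hα' | hα'
  · rw [max_eq_left (by linarith)]
    exact add_le_kantorovich_rpow_mul_rpow_of_half_le hx hα'
  · rw [max_eq_right (by linarith)]
    have h := add_le_kantorovich_rpow_mul_rpow_of_half_le (inv_pos.2 hx) (α := 1 - α)
      (by linarith)
    rw [kantorovich_inv, Real.inv_rpow hx.le] at h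
    have hx' : x * (x ^ (1 - α))⁻¹ = x ^ α := by
      rw [← div_eq_mul_inv]; simpa using (Real.rpow_sub hx 1 (1 - α)).symm
    calc (1 - α) + α * x = x * ((1 - (1 - α)) + (1 - α) * x⁻¹) := by field_simp; ring
      _ ≤ x * (kantorovich x ^ (1 - α) * (x ^ (1 - α))⁻¹) := by gcongr
      _ = kantorovich x ^ (1 - α) * x ^ α := by
        rw [mul_left_comm, hx']

lemma add_le_max_kantorovich_rpow_mul_rpow {s t x : ℝ} (hs : 0 < s) (hx : x ∈ Icc s t)
    (α : ℝ) : (1 - α) + α * x ≤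
      max (kantorovich s ^ max α (1 - α)) (kantorovich t ^ max α (1 - α)) * x ^ α := by
  have hx0 : 0 < x := hs.trans_le hx.1
  have hR : 0 ≤ max α (1 - α) := by
    by_contra! h; linarith [le_max_left α (1 - α), le_max_right α (1 - α)]
  rw [← Real.rpow_max (kantorovich_nonneg hs.le) (kantorovich_nonneg (hx0.le.trans hx.2)) hR]
  calc (1 - α) + α * x ≤ kantorovich x ^ max α (1 - α) * x ^ α :=
        add_le_kantorovich_rpow_mul_rpow hx0 α
    _ ≤ _ := by
        gcongr
        · exact kantorovich_nonneg hx0.le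
        · exact kantorovich_le_max_of_mem_Icc hs hx

lemma isSelfAdjoint_mrpow (A : Matrix n n ℂ) (r : ℝ) : IsSelfAdjoint (mrpow A r) :=
  cfc_predicate _ A

namespace Matrix.PosDef

variable {A : Matrix n n ℂ} (hA : A.PosDef)
include hA

lemma mrpow_mul_mrpow (r q : ℝ) : mrpow A r * mrpow A q = mrpow A (r + q) := by
  have hpos : ∀ x ∈ spectrum ℝ A, 0 < x := fun _ hx ↦ hA.isStrictlyPositive.spectrum_pos hx
  have hcont (p : ℝ) : ContinuousOn (fun x : ℝ ↦ x ^ p) (spectrum ℝ A) :=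
    continuousOn_id.rpow_const fun x hx ↦ Or.inl (hpos x hx).ne'
  rw [mrpow, mrpow, ← cfc_mul _ _ A (hcont r) (hcont q)]
  exact cfc_congr fun x hx ↦ (Real.rpow_add (hpos x hx) r q).symm

lemma mrpow_one : mrpow A 1 = A := by
  have : IsSelfAdjoint A := hA.isHermitian
  rw [mrpow, cfc_congr (g := id) fun x _ ↦ Real.rpow_one x, cfc_id ℝ A]

lemma mrpow_zero : mrpow A 0 = 1 := by
  have : IsSelfAdjoint A := hA.isHermitian
  rw [mrpow, cfc_congr (g := fun _ ↦ 1) fun x _ ↦ Real.rpow_zero x, cfc_const_one ℝ A]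

lemma mrpow_half_mul_mrpow_half : mrpow A (1/2) * mrpow A (1/2) = A := by
  rw [mrpow_mul_mrpow hA]; norm_num [hA.mrpow_one]

lemma mrpow_half_mul_mrpow_neg_half : mrpow A (1/2) * mrpow A (-(1/2)) = 1 := by
  rw [mrpow_mul_mrpow hA]; norm_num [hA.mrpow_zero]

lemma mrpow_neg_half_mul_mrpow_half : mrpow A (-(1/2)) * mrpow A (1/2) = 1 := by
  rw [mrpow_mul_mrpow hA]; norm_num [hA.mrpow_zero]

lemma mrpow_neg_half_conj_self : mrpow A (-(1/2)) * A * mrpow A (-(1/2)) = 1 := by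
  calc mrpow A (-(1/2)) * A * mrpow A (-(1/2))
      = (mrpow A (-(1/2)) * mrpow A (1/2)) * (mrpow A (1/2) * mrpow A (-(1/2))) := by
        simp only [Matrix.mul_assoc]
        rw [← Matrix.mul_assoc (mrpow A (1/2)) (mrpow A (1/2)), hA.mrpow_half_mul_mrpow_half]
    _ = 1 := by rw [hA.mrpow_neg_half_mul_mrpow_half, hA.mrpow_half_mul_mrpow_neg_half, one_mul]

lemma mrpow_half_conj_mrpow_neg_half_conj (B : Matrix n n ℂ) :
    mrpow A (1/2) * (mrpow A (-(1/2)) * B * mrpow A (-(1/2))) * mrpow A (1/2) = B := by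
  simp only [Matrix.mul_assoc, hA.mrpow_neg_half_mul_mrpow_half, Matrix.mul_one]
  rw [← Matrix.mul_assoc, hA.mrpow_half_mul_mrpow_neg_half, Matrix.one_mul]

end Matrix.PosDef

section CFC

variable {𝒜 : Type*} [Ring 𝒜] [StarRing 𝒜] [PartialOrder 𝒜] [StarOrderedRing 𝒜]
  [Algebra ℝ 𝒜] [StarModule ℝ 𝒜]

lemma isSelfAdjoint_of_smul_one_le {C : 𝒜} {s : ℝ} (hsC : s • (1 : 𝒜) ≤ C) : IsSelfAdjoint C :=
  IsSelfAdjoint.of_ge hsC (.smul (.all s) (.one _))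

variable [TopologicalSpace 𝒜] [ContinuousFunctionalCalculus ℝ 𝒜 IsSelfAdjoint]
  [NonnegSpectrumClass ℝ 𝒜]

lemma spectrum_subset_Icc_of_smul_one_le {C : 𝒜} {s t : ℝ}
    (hsC : s • (1 : 𝒜) ≤ C) (hCt : C ≤ t • 1) : spectrum ℝ C ⊆ Icc s t := by
  have hC := isSelfAdjoint_of_smul_one_le hsC
  rw [← Algebra.algebraMap_eq_smul_one] at hsC hCt
  exact fun x hx ↦ ⟨(algebraMap_le_iff_le_spectrum hC).1 hsC x hx,
    (le_algebraMap_iff_spectrum_le hC).1 hCt x hx⟩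

lemma smul_one_add_smul_le_smul_cfc_rpow {C : 𝒜} {s t : ℝ} (hs : 0 < s)
    (hsC : s • (1 : 𝒜) ≤ C) (hCt : C ≤ t • 1) (α : ℝ) :
    (1 - α) • (1 : 𝒜) + α • C ≤
      max (kantorovich s ^ max α (1 - α)) (kantorovich t ^ max α (1 - α)) •
        cfc (fun x : ℝ ↦ x ^ α) C := by
  have hC := isSelfAdjoint_of_smul_one_le hsC
  have hspec := spectrum_subset_Icc_of_smul_one_le hsC hCt
  have hcont : ContinuousOn (fun x : ℝ ↦ x ^ α) (spectrum ℝ C) :=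
    continuousOn_id.rpow_const fun x hx ↦ Or.inl (hs.trans_le (hspec hx).1).ne'
  have hmono := cfc_mono fun x hx ↦ add_le_max_kantorovich_rpow_mul_rpow hs (hspec hx) α
  rwa [cfc_const_add _ _ _, cfc_const_mul_id _ _, cfc_const_mul _ _ _ hcont,
    Algebra.algebraMap_eq_smul_one] at hmono

end CFC

theorem stmt_4_general (A B : Matrix n n ℂ) (hA : A.PosDef)
    (s t α : ℝ) (hs : 0 < s)
    (h1 : (B - s • A).PosSemidef) (h2 : (t • A - B).PosSemidef) :
    (max (((s + 1)^2 / (4 * s)) ^ max α (1 - α)) (((t + 1)^2 / (4 * t)) ^ max α (1 - α)) •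
        geomMean A B α - ((1 - α) • A + α • B)).PosSemidef := by
  have hX := isSelfAdjoint_mrpow A (-(1/2))
  have hsC : s • 1 ≤ mrpow A (-(1/2)) * B * mrpow A (-(1/2)) := by
    simpa only [Matrix.mul_smul, Matrix.smul_mul, hA.mrpow_neg_half_conj_self]
      using hX.conjugate_le_conjugate (show s • A ≤ B from h1)
  have hCt : mrpow A (-(1/2)) * B * mrpow A (-(1/2)) ≤ t • 1 := by
    simpa only [Matrix.mul_smul, Matrix.smul_mul, hA.mrpow_neg_half_conj_self]
      using hX.conjugate_le_conjugate (show B ≤ t • A from h2)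
  have key := (isSelfAdjoint_mrpow A (1/2)).conjugate_le_conjugate
    (smul_one_add_smul_le_smul_cfc_rpow hs hsC hCt α)
  simp only [Matrix.mul_add, Matrix.add_mul, Matrix.mul_smul, Matrix.smul_mul, Matrix.mul_one,
    hA.mrpow_half_mul_mrpow_half, hA.mrpow_half_conj_mrpow_neg_half_conj] at key
  -- `kantorovich`, `geomMean` and the Loewner order unfold to the statement's expressions
  exact key

theorem stmt_4 (A B : Matrix n n ℂ) (hA : A.PosDef) (hB : B.PosDef)
    (s t α : ℝ) (hs : 0 < s) (hst : s ≤ t)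
    (h1 : (B - s • A).PosSemidef) (h2 : (t • A - B).PosSemidef)
    (hα : α ∈ Set.Icc (0:ℝ) 1) :
    (max (((s + 1)^2 / (4 * s)) ^ max α (1 - α)) (((t + 1)^2 / (4 * t)) ^ max α (1 - α)) •
        geomMean A B α - ((1 - α) • A + α • B)).PosSemidef :=
  stmt_4_general A B hA s t α hs h1 h2
end

section
/- Let $a, b > 0$ with $0 < s a \le b \le a$ for a constant $s \le 1$ and $\alpha \in [0,1]$. Then $(1-\alpha)a + \alpha b \le M_\alpha(s) \, a^{1-\alpha} b^{\alpha}$, where $M_\alpha(s) = 1 + \frac{\alpha(1-\alpha)(s-1)^2}{2 s^{\alpha+1}}$. -/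
open Real Set

/-!
With `t = b / a ∈ [s, 1]` the inequality reads `(1 - α) + α t ≤ M t ^ α`. Since `t ^ α - α t`
increases on `(0, 1]` and `M ≥ 1`, the worst case is `t = s`, i.e.
`(1 - α) + α s - s ^ α ≤ α (1 - α) (1 - s)² / (2 s)`. For this, the function
`x ^ α + α (1 - α) / 2 · (1 - x)² / x - α x` is antitone on `(0, ∞)`: its derivative is `α` times
`x ^ (α - 1) - 1 - (1 - α) / 2 · (x⁻² - 1)`, which is `≤ 0` by Bernoulli's inequality applied to
`x ^ (α - 1) = (x⁻²) ^ ((1 - α) / 2)`. Comparing its values at `s` and at `1` gives the claim.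
-/

lemma rpow_le_one_add_mul_sub_one {y p : ℝ} (hy : 0 ≤ y) (hp0 : 0 ≤ p) (hp1 : p ≤ 1) :
    y ^ p ≤ 1 + p * (y - 1) := by
  simpa using rpow_one_add_le_one_add_mul_self (s := y - 1) (by linarith) hp0 hp1

lemma rpow_sub_one_le_one_add_mul_inv_sq_sub_one {x α : ℝ} (hx : 0 < x) (hα0 : -1 ≤ α)
    (hα1 : α ≤ 1) : x ^ (α - 1) ≤ 1 + (1 - α) / 2 * ((x ^ 2)⁻¹ - 1) := by
  have hpow : x ^ (α - 1) = ((x ^ 2)⁻¹) ^ ((1 - α) / 2) := by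
    rw [← rpow_two, ← rpow_neg hx.le, ← rpow_mul hx.le]
    ring_nf
  rw [hpow]
  exact rpow_le_one_add_mul_sub_one (by positivity) (by linarith) (by linarith)

lemma antitoneOn_rpow_add_mul_inv_sub_two_add_sub_mul {α : ℝ} (hα0 : 0 ≤ α) (hα1 : α ≤ 1) :
    AntitoneOn (fun x : ℝ => x ^ α + α * (1 - α) / 2 * (x⁻¹ - 2 + x) - α * x) (Ioi 0) := by
  have hderiv (x : ℝ) (hx : 0 < x) :
      HasDerivAt (fun x : ℝ => x ^ α + α * (1 - α) / 2 * (x⁻¹ - 2 + x) - α * x)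
        (α * x ^ (α - 1) + α * (1 - α) / 2 * (-(x ^ 2)⁻¹ + 1) - α) x := by
    have hrpow := hasDerivAt_rpow_const (p := α) (Or.inl hx.ne')
    have hquad := ((hasDerivAt_inv hx.ne').sub_const 2).add (hasDerivAt_id x)
    exact ((hrpow.add (hquad.const_mul _)).sub ((hasDerivAt_id' x).const_mul α)).congr_deriv
      (by ring)
  refine antitoneOn_of_deriv_nonpos (convex_Ioi 0)
    (fun x hx => (hderiv x hx).continuousAt.continuousWithinAt) (fun x hx => ?_) (fun x hx => ?_)
    <;> rw [interior_Ioi] at hx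
  · exact (hderiv x hx).differentiableAt.differentiableWithinAt
  · rw [(hderiv x hx).deriv]
    nlinarith [mul_le_mul_of_nonneg_left
      (rpow_sub_one_le_one_add_mul_inv_sq_sub_one hx (by linarith) hα1) hα0]

lemma one_sub_add_mul_sub_rpow_le {α s : ℝ} (hα0 : 0 ≤ α) (hα1 : α ≤ 1) (hs : 0 < s)
    (hs1 : s ≤ 1) : (1 - α) + α * s - s ^ α ≤ α * (1 - α) * (1 - s) ^ 2 / (2 * s) := by
  have hmono := antitoneOn_rpow_add_mul_inv_sub_two_add_sub_mul hα0 hα1 hs (mem_Ioi.2 one_pos) hs1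
  have hquad : s⁻¹ - 2 + s = (1 - s) ^ 2 / s := by field_simp; ring
  simp only [one_rpow, inv_one, hquad] at hmono
  have hcoef : α * (1 - α) / 2 * ((1 - s) ^ 2 / s) = α * (1 - α) * (1 - s) ^ 2 / (2 * s) := by
    ring
  linarith

lemma mul_sub_le_rpow_sub_rpow {α s t : ℝ} (hα0 : 0 ≤ α) (hα1 : α ≤ 1) (hs : 0 < s)
    (hst : s ≤ t) (ht1 : t ≤ 1) : α * (t - s) ≤ t ^ α - s ^ α := by
  have ht : 0 < t := hs.trans_le hst
  have hratio := rpow_le_one_add_mul_sub_one (div_nonneg hs.le ht.le) hα0 hα1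
  rw [div_rpow hs.le ht.le, div_le_iff₀ (rpow_pos_of_pos ht α)] at hratio
  have hslope : 1 ≤ t ^ α / t := (one_le_div ht).2 (self_le_rpow_of_le_one ht.le ht1 hα1)
  have hgap : 0 ≤ α * (t - s) := mul_nonneg hα0 (sub_nonneg.2 hst)
  suffices s ^ α ≤ t ^ α - α * (t - s) by linarith
  calc s ^ α ≤ (1 + α * (s / t - 1)) * t ^ α := hratio
    _ = t ^ α - α * (t - s) * (t ^ α / t) := by field_simp; ring
    _ ≤ t ^ α - α * (t - s) * 1 := by gcongr
    _ = t ^ α - α * (t - s) := by ring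

lemma one_sub_add_mul_le_mul_rpow {α s t : ℝ} (hα0 : 0 ≤ α) (hα1 : α ≤ 1) (hs : 0 < s)
    (hst : s ≤ t) (ht1 : t ≤ 1) :
    (1 - α) + α * t ≤ (1 + α * (1 - α) * (s - 1) ^ 2 / (2 * s ^ (α + 1))) * t ^ α := by
  set δ := α * (1 - α) * (s - 1) ^ 2 / (2 * s ^ (α + 1))
  have hδ : 0 ≤ δ := by
    have : 0 ≤ 1 - α := by linarith
    positivity
  have hδs : δ * s ^ α = α * (1 - α) * (1 - s) ^ 2 / (2 * s) := by
    simp only [δ, rpow_add hs, rpow_one]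
    field_simp
    ring
  have hkey := one_sub_add_mul_sub_rpow_le hα0 hα1 hs (hst.trans ht1)
  have hincr := mul_sub_le_rpow_sub_rpow hα0 hα1 hs hst ht1
  have hpow : δ * s ^ α ≤ δ * t ^ α := by gcongr
  linarith

lemma rpow_one_sub_mul_rpow_eq_mul_div_rpow {a b α : ℝ} (ha : 0 < a) (hb : 0 ≤ b) :
    a ^ (1 - α) * b ^ α = a * (b / a) ^ α := by
  rw [div_rpow hb ha.le, rpow_sub ha, rpow_one]
  field_simp

theorem stmt_10_general (a b s α : ℝ) (ha : 0 < a) (hs : 0 < s)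
    (h1 : s * a ≤ b) (h2 : b ≤ a) (hα : α ∈ Set.Icc (0:ℝ) 1) :
    (1 - α) * a + α * b ≤
      (1 + α * (1 - α) * (s - 1)^2 / (2 * s ^ (α + 1))) * (a ^ (1 - α) * b ^ α) := by
  have hst : s ≤ b / a := (le_div_iff₀ ha).2 h1
  have ht1 : b / a ≤ 1 := (div_le_one ha).2 h2
  calc (1 - α) * a + α * b = a * ((1 - α) + α * (b / a)) := by field_simp
    _ ≤ a * ((1 + α * (1 - α) * (s - 1) ^ 2 / (2 * s ^ (α + 1))) * (b / a) ^ α) := by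
      gcongr
      exact one_sub_add_mul_le_mul_rpow hα.1 hα.2 hs hst ht1
    _ = _ := by
      rw [rpow_one_sub_mul_rpow_eq_mul_div_rpow ha ((mul_pos hs ha).le.trans h1)]
      ring

theorem stmt_10 (a b s α : ℝ) (ha : 0 < a) (hs : 0 < s) (hs1 : s ≤ 1)
    (h1 : s * a ≤ b) (hb : 0 < b) (h2 : b ≤ a) (hα : α ∈ Set.Icc (0:ℝ) 1) :
    (1 - α) * a + α * b ≤
      (1 + α * (1 - α) * (s - 1)^2 / (2 * s ^ (α + 1))) * (a ^ (1 - α) * b ^ α) :=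
  stmt_10_general a b s α ha hs h1 h2 hα
end

section
/- For every $\alpha \in [0,1]$ and $0 < s \le 1$, $M_\alpha(s) \le \exp\left( \frac{1}{2}\alpha(1-\alpha)\left(\frac{1}{s}-1\right)^2 \right)$, where $M_\alpha(s) = 1 + \frac{\alpha(1-\alpha)(s-1)^2}{2 s^{\alpha+1}}$. -/
theorem stmt_11 (α s : ℝ) (hα : α ∈ Set.Icc (0:ℝ) 1) (hs : 0 < s) (hs1 : s ≤ 1) :
    1 + α * (1 - α) * (s - 1)^2 / (2 * s ^ (α + 1)) ≤
      Real.exp ((1/2) * α * (1 - α) * (1/s - 1)^2) := by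
  obtain ⟨h0, h1⟩ := hα
  have hc : 0 ≤ α * (1 - α) := mul_nonneg h0 (by linarith)
  have hpow : s ^ (2:ℝ) ≤ s ^ (α + 1) :=
    Real.rpow_le_rpow_of_exponent_ge hs hs1 (by linarith)
  have hs2 : s ^ (2:ℝ) = s ^ 2 := by
    rw [show (2:ℝ) = ((2:ℕ):ℝ) by norm_num, Real.rpow_natCast]
  rw [hs2] at hpow
  have hpos : (0:ℝ) < s ^ (α + 1) := Real.rpow_pos_of_pos hs _
  have key : α * (1 - α) * (s - 1)^2 / (2 * s ^ (α + 1)) ≤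
      (1/2) * α * (1 - α) * (1/s - 1)^2 := by
    have h2 : α * (1 - α) * (s - 1)^2 / (2 * s ^ (α + 1)) ≤
        α * (1 - α) * (s - 1)^2 / (2 * s ^ 2) := by
      apply div_le_div_of_nonneg_left (by positivity) (by positivity)
      linarith
    have h3 : α * (1 - α) * (s - 1)^2 / (2 * s ^ 2) =
        (1/2) * α * (1 - α) * (1/s - 1)^2 := by
      field_simp
      ring_nf
    linarith
  have hexp := Real.add_one_le_exp ((1/2) * α * (1 - α) * (1/s - 1)^2)
  linarith
end

section
/- There is no ordering between the Kantorovich-type and exponential reverse-Young constants: there exist $\alpha_1, \alpha_2 \in [0,1]$ and $s_1, s_2 \in (0,1)$ such that $\max\{K(s_1)^{\alpha_1}, K(s_1)^{1-\alpha_1}\} > \exp\left( \frac{1}{2}\alpha_1(1-\alpha_1)(\frac{1}{s_1}-1)^2 \right)$ and $\max\{K(s_2)^{\alpha_2}, K(s_2)^{1-\alpha_2}\} < \exp\left( \frac{1}{2}\alpha_2(1-\alpha_2)(\frac{1}{s_2}-1)^2 \right)$, where $K(x)=(x+1)^2/(4x)$. -/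
theorem stmt_13 :
    ∃ α₁ α₂ s₁ s₂ : ℝ, α₁ ∈ Set.Icc (0:ℝ) 1 ∧ α₂ ∈ Set.Icc (0:ℝ) 1 ∧
      s₁ ∈ Set.Ioo (0:ℝ) 1 ∧ s₂ ∈ Set.Ioo (0:ℝ) 1 ∧
      max (((s₁ + 1)^2 / (4 * s₁)) ^ α₁) (((s₁ + 1)^2 / (4 * s₁)) ^ (1 - α₁)) >
        Real.exp ((1/2) * α₁ * (1 - α₁) * (1/s₁ - 1)^2) ∧
      max (((s₂ + 1)^2 / (4 * s₂)) ^ α₂) (((s₂ + 1)^2 / (4 * s₂)) ^ (1 - α₂)) <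
        Real.exp ((1/2) * α₂ * (1 - α₂) * (1/s₂ - 1)^2) := by
  refine ⟨1, 1/2, 1/2, 3/10, by norm_num, by norm_num, by norm_num, by norm_num, ?_, ?_⟩
  · have h1 : (((1:ℝ)/2 + 1)^2 / (4 * (1/2))) = 9/8 := by norm_num
    rw [h1]
    have : ((9:ℝ)/8) ^ (1:ℝ) = 9/8 := Real.rpow_one _
    rw [this]
    have : ((9:ℝ)/8) ^ ((1:ℝ) - 1) = 1 := by norm_num
    rw [this]
    have hmax : max ((9:ℝ)/8) 1 = 9/8 := by norm_num
    rw [hmax]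
    have : ((1:ℝ)/2) * 1 * (1 - 1) * (1/(1/2) - 1)^2 = 0 := by ring
    rw [this, Real.exp_zero]
    norm_num
  · have hK : (((3:ℝ)/10 + 1)^2 / (4 * (3/10))) = 169/120 := by norm_num
    rw [hK]
    have hmax : max (((169:ℝ)/120) ^ ((1:ℝ)/2)) (((169:ℝ)/120) ^ ((1:ℝ) - 1/2)) =
        ((169:ℝ)/120) ^ ((1:ℝ)/2) := by norm_num
    rw [hmax]
    have h1 : ((169:ℝ)/120) ^ ((1:ℝ)/2) ≤ ((169:ℝ)/120) ^ (1:ℝ) :=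
      Real.rpow_le_rpow_of_exponent_le (by norm_num) (by norm_num)
    rw [Real.rpow_one] at h1
    have h2 : ((169:ℝ)/120) < Real.exp ((1/2) * (1/2) * (1 - 1/2) * (1/(3/10) - 1)^2) := by
      have he : ((1:ℝ)/2) * (1/2) * (1 - 1/2) * (1/(3/10) - 1)^2 = 49/72 := by norm_num
      rw [he]
      have := Real.add_one_le_exp ((49:ℝ)/72)
      linarith
    exact lt_of_le_of_lt h1 h2
end

section
/- There is no ordering between the Kantorovich power and Specht's ratio: there exist $\alpha_1, \alpha_2 \in [0,1]$ and $t_1, t_2 > 1$ such that $\max\{K(t_1)^{\alpha_1}, K(t_1)^{1-\alpha_1}\} > S(t_1)$ and $\max\{K(t_2)^{\alpha_2}, K(t_2)^{1-\alpha_2}\} < S(t_2)$, where $K(x)=(x+1)^2/(4x)$ and $S(t) = \frac{t^{1/(t-1)}}{e \log t^{1/(t-1)}}$. -/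
noncomputable def specht (t : ℝ) : ℝ := t ^ (1/(t-1)) / (Real.exp 1 * Real.log (t ^ (1/(t-1))))

lemma specht_nine_bounds : 5/3 < specht 9 ∧ specht 9 < 25/9 := by
  have h9 : (0:ℝ) < 9 := by norm_num
  have hE1 : (2.7182818283:ℝ) < Real.exp 1 := Real.exp_one_gt_d9
  have hE2 : Real.exp 1 < 2.7182818286 := Real.exp_one_lt_d9
  have hEpos : (0:ℝ) < Real.exp 1 := Real.exp_pos 1
  -- bounds on log 9
  have hL1 : (2:ℝ) < Real.log 9 := by
    rw [Real.lt_log_iff_exp_lt h9]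
    have : Real.exp 2 = Real.exp 1 * Real.exp 1 := by
      rw [← Real.exp_add]; norm_num
    rw [this]
    nlinarith [hE2, hEpos]
  have hL2 : Real.log 9 < 2.314 := by
    rw [Real.log_lt_iff_lt_exp h9]
    have h1 : Real.exp 2.314 = Real.exp 1 * Real.exp 1 * Real.exp 0.314 := by
      rw [← Real.exp_add, ← Real.exp_add]; norm_num
    have h2 : (1.314:ℝ) ≤ Real.exp 0.314 := by
      have := Real.add_one_le_exp (0.314:ℝ); linarith
    rw [h1]
    nlinarith [hE1, hEpos]
  have hLpos : (0:ℝ) < Real.log 9 := by linarith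
  -- bounds on P = 9^(1/8)
  set P : ℝ := (9:ℝ) ^ ((1:ℝ)/8) with hP
  have hP1 : (1.316:ℝ) < P := by
    have key : ((1.316:ℝ) ^ (8:ℕ) : ℝ) ^ ((1:ℝ)/8) < P := by
      apply Real.rpow_lt_rpow (by positivity) (by norm_num) (by norm_num)
    calc (1.316:ℝ) = (((1.316:ℝ) ^ (8:ℕ)) ^ ((1:ℝ)/8)) := by
          rw [← Real.rpow_natCast (1.316:ℝ) 8, ← Real.rpow_mul (by norm_num)]
          norm_num
      _ < P := key
  have hP2 : P < 1.35 := by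
    have key : P < ((1.35:ℝ) ^ (8:ℕ) : ℝ) ^ ((1:ℝ)/8) := by
      apply Real.rpow_lt_rpow (by norm_num) (by norm_num) (by norm_num)
    calc P < (((1.35:ℝ) ^ (8:ℕ)) ^ ((1:ℝ)/8)) := key
      _ = 1.35 := by
          rw [← Real.rpow_natCast (1.35:ℝ) 8, ← Real.rpow_mul (by norm_num)]
          norm_num
  have hPpos : (0:ℝ) < P := by linarith
  -- unfold specht
  have hspe : specht 9 = P / (Real.exp 1 * ((1/8) * Real.log 9)) := by
    unfold specht
    rw [show (1:ℝ)/(9-1) = (1:ℝ)/8 by norm_num, Real.log_rpow h9]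
  constructor
  · rw [hspe, lt_div_iff₀ (by positivity)]
    nlinarith [hE2, hL2, hP1]
  · rw [hspe, div_lt_iff₀ (by positivity)]
    nlinarith [hE1, hL1, hP2, hEpos, hLpos]

theorem stmt_14 :
    ∃ α₁ α₂ t₁ t₂ : ℝ, α₁ ∈ Set.Icc (0:ℝ) 1 ∧ α₂ ∈ Set.Icc (0:ℝ) 1 ∧
      1 < t₁ ∧ 1 < t₂ ∧
      max (((t₁ + 1)^2 / (4 * t₁)) ^ α₁) (((t₁ + 1)^2 / (4 * t₁)) ^ (1 - α₁)) > specht t₁ ∧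
      max (((t₂ + 1)^2 / (4 * t₂)) ^ α₂) (((t₂ + 1)^2 / (4 * t₂)) ^ (1 - α₂)) < specht t₂ := by
  obtain ⟨hlo, hhi⟩ := specht_nine_bounds
  refine ⟨1, 1/2, 9, 9, by norm_num, by norm_num, by norm_num, by norm_num, ?_, ?_⟩
  · have hK : ((9:ℝ) + 1)^2 / (4 * 9) = 25/9 := by norm_num
    rw [hK]
    rw [show (1:ℝ) - 1 = 0 by norm_num, Real.rpow_one, Real.rpow_zero]
    rw [max_eq_left (by norm_num)]
    exact hhi
  · have hK : ((9:ℝ) + 1)^2 / (4 * 9) = 25/9 := by norm_num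
    rw [hK]
    rw [show (1:ℝ) - 1/2 = 1/2 by norm_num, max_self]
    have : ((25:ℝ)/9) ^ ((1:ℝ)/2) = 5/3 := by
      rw [show (25:ℝ)/9 = (5/3)^2 by norm_num, ← Real.rpow_natCast ((5:ℝ)/3) 2,
        ← Real.rpow_mul (by norm_num)]
      norm_num
    rw [this]
    exact hlo
end
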